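/- The determinant of the matrix A_n factors completely into linear factors: det A_n = ∏_{k=2}^{n} ∏_{i=1}^{k-1} (1 - q_i t_{k-i})^{binom(n-1,k-1)}. -/

import Mathlib

/-! Compositions of `n` are encoded by their descent sets, i.e. by boolean
words `u : Fin (n-1) → Bool`, where `u j = true` iff `j+1` is a descent. -/

/-- The (increasingly sorted) list of descents of the composition of `n = m+1`
encoded by the boolean word `v : Fin m → Bool`. -/
def desList {m : ℕ} (v : Fin m → Bool) : List ℕ :=
  ((List.finRange m).filter (fun j => v j)).map (fun j => (j : ℕ) + 1)

/-- `𝒜(I,J) = {k < ℓ(J) : j_1 + ⋯ + j_k ∉ Des(I)}` for the compositions `I, J`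
encoded by the words `u, v`. -/
def AAset {m : ℕ} (u v : Fin m → Bool) : Finset ℕ :=
  (Finset.Icc 1 (desList v).length).filter
    (fun k => (desList v).getD (k-1) 0 ∉ desList u)

/-- The mirror image `Ī` (reversed word). -/
def mirW {m : ℕ} (u : Fin m → Bool) : Fin m → Bool := fun j => u j.rev

/-- The conjugate of the mirror image `Ī∼` (complemented word). -/
def cmplW {m : ℕ} (u : Fin m → Bool) : Fin m → Bool := fun j => ! u j

/-- The entry `A_n(I,J) = (∏_{k ∈ 𝒜(Ī,J̄)} t_k) · (∏_{l ∈ 𝒜(Ī∼,J̄∼)} q_l)`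
of the `2^(n-1) × 2^(n-1)` matrix `A_n` (here `n = m+1`). -/
def matA {R : Type*} [CommRing R] (q t : ℕ → R) {m : ℕ} (u v : Fin m → Bool) : R :=
  (∏ k ∈ AAset (mirW u) (mirW v), t k) * (∏ l ∈ AAset (cmplW u) (cmplW v), q l)

/-! Reading a word `v : Fin (m+1) → Bool` as its first letter followed by a word of length `m`
puts `A_{m+2}` in the block form `[[B, A·T], [q₁·B, A]]`, where `A = A_{m+1}`, `B` is `A` with
`q` shifted and `T = diag(t_{ℓ(v)+1})`, `ℓ(v)` being the number of descents: after mirroring,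
the first letter becomes the last one and can only add the last position to the `t`-factor,
while in the `q`-factor it can only add position `1` and shifts all other positions. Block
elimination gives `det A_{m+2} = det B · det A · ∏_v (1 - q₁ t_{ℓ(v)+1})`. The product
`∏_v Λ_{ℓ(v)}`, with `Λ_j = ∏_{i<j} (1 - q_{i+1} t_{j-i})`, satisfies the same recursion, and
grouping the words by `ℓ(v)` produces the binomial exponents. -/

def posNotIn (L M : List ℕ) : Finset ℕ :=
  (Finset.Icc 1 L.length).filter (fun k => L.getD (k - 1) 0 ∉ M)

theorem mem_posNotIn {L M : List ℕ} {k : ℕ} :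
    k ∈ posNotIn L M ↔ ∃ i, ∃ h : i < L.length, i + 1 = k ∧ L[i] ∉ M := by
  simp only [posNotIn, Finset.mem_filter, Finset.mem_Icc]
  constructor
  · rintro ⟨⟨hk1, hk⟩, hkM⟩
    refine ⟨k - 1, by omega, by omega, ?_⟩
    rwa [List.getD_eq_getElem _ _ (by omega)] at hkM
  · rintro ⟨i, hi, rfl, hiM⟩
    exact ⟨⟨by omega, hi⟩, by rwa [Nat.add_sub_cancel, List.getD_eq_getElem _ _ hi]⟩

theorem posNotIn_congr_right {L M M' : List ℕ} (h : ∀ x ∈ L, x ∈ M ↔ x ∈ M') :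
    posNotIn L M = posNotIn L M' := by
  ext k
  simp only [mem_posNotIn]
  exact exists_congr fun i => exists_congr fun hi => and_congr_right' <|
    not_congr (h _ (List.getElem_mem hi))

theorem posNotIn_map {f : ℕ → ℕ} (hf : Function.Injective f) (L M : List ℕ) :
    posNotIn (L.map f) (M.map f) = posNotIn L M := by
  ext k
  simp [mem_posNotIn, List.mem_map_of_injective hf]

theorem posNotIn_singleton (x : ℕ) (M : List ℕ) :
    posNotIn [x] M = if x ∈ M then ∅ else {1} := by
  split_ifs with hx <;> ext k <;> simp [mem_posNotIn, hx, eq_comm]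

theorem posNotIn_append (L L' M : List ℕ) :
    posNotIn (L ++ L') M =
      posNotIn L M ∪ (posNotIn L' M).map (addRightEmbedding L.length) := by
  ext k
  simp only [Finset.mem_union, Finset.mem_map, addRightEmbedding_apply, mem_posNotIn,
    List.length_append]
  constructor
  · rintro ⟨i, hi, rfl, hiM⟩
    by_cases h : i < L.length
    · exact Or.inl ⟨i, h, rfl, by rwa [List.getElem_append_left h] at hiM⟩
    · refine Or.inr ⟨i - L.length + 1, ⟨i - L.length, by omega, rfl, ?_⟩, by omega⟩
      rwa [List.getElem_append_right (by omega)] at hiM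
  · rintro (⟨i, hi, rfl, hiM⟩ | ⟨_, ⟨j, hj, rfl, hjM⟩, rfl⟩)
    · exact ⟨i, by omega, rfl, by rwa [List.getElem_append_left hi]⟩
    · refine ⟨j + L.length, by omega, by omega, ?_⟩
      simpa [List.getElem_append_right] using hjM

theorem prod_posNotIn_append {M : Type*} [CommMonoid M] (f : ℕ → M) (L L' N : List ℕ) :
    ∏ k ∈ posNotIn (L ++ L') N, f k =
      (∏ k ∈ posNotIn L N, f k) * ∏ k ∈ posNotIn L' N, f (k + L.length) := by
  have hdisj : Disjoint (posNotIn L N) ((posNotIn L' N).map (addRightEmbedding L.length)) := by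
    simp only [Finset.disjoint_left, Finset.mem_map, addRightEmbedding_apply, mem_posNotIn]
    rintro _ ⟨i, hi, rfl, -⟩ ⟨_, ⟨j, -, rfl, -⟩, h⟩
    omega
  rw [posNotIn_append, Finset.prod_union hdisj, Finset.prod_map]
  rfl

theorem Matrix.det_fromBlocks_smul_top_left {n R : Type*} [Fintype n] [DecidableEq n] [CommRing R]
    (B X A : Matrix n n R) (c : R) :
    (Matrix.fromBlocks B X (c • B) A).det = B.det * (A - c • X).det := by
  have hfactor : Matrix.fromBlocks B X (c • B) A =
      Matrix.fromBlocks 1 0 (c • 1) 1 * Matrix.fromBlocks B X 0 (A - c • X) := by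
    simp [Matrix.fromBlocks_multiply]
  rw [hfactor, Matrix.det_mul, Matrix.det_fromBlocks_zero₁₂, Matrix.det_fromBlocks_zero₂₁]
  simp

theorem Finset.prod_range_pow_choose_succ {M : Type*} [CommMonoid M] (g : ℕ → M) (m : ℕ) :
    ∏ j ∈ Finset.range (m + 2), g j ^ (m + 1).choose j =
      (∏ j ∈ Finset.range (m + 1), g j ^ m.choose j) *
        ∏ j ∈ Finset.range (m + 1), g (j + 1) ^ m.choose j := by
  have hshift : (∏ j ∈ Finset.range (m + 1), g (j + 1) ^ m.choose (j + 1)) * g 0 =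
      ∏ j ∈ Finset.range (m + 1), g j ^ m.choose j := by
    have h := Finset.prod_range_succ' (fun j => g j ^ m.choose j) (m + 1)
    rw [Finset.prod_range_succ, Nat.choose_succ_self, pow_zero, mul_one] at h
    simpa using h.symm
  rw [Finset.prod_range_succ', ← hshift]
  simp only [Nat.choose_succ_succ', pow_add, Finset.prod_mul_distrib, Nat.choose_zero_right,
    pow_one]
  ac_rfl

def consSplit (m : ℕ) : (Fin m → Bool) ⊕ (Fin m → Bool) ≃ (Fin (m + 1) → Bool) :=
  (Equiv.boolProdEquivSum _).symm.trans (Fin.consEquiv fun _ => Bool)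

@[simp]
theorem consSplit_inl {m : ℕ} (v : Fin m → Bool) : consSplit m (Sum.inl v) = Fin.cons false v :=
  rfl

@[simp]
theorem consSplit_inr {m : ℕ} (v : Fin m → Bool) : consSplit m (Sum.inr v) = Fin.cons true v :=
  rfl

theorem prod_fun_bool_succ {M : Type*} [CommMonoid M] {m : ℕ} (f : (Fin (m + 1) → Bool) → M) :
    ∏ v, f v = (∏ v, f (Fin.cons false v)) * ∏ v, f (Fin.cons true v) := by
  rw [← (consSplit m).prod_comp, Fintype.prod_sum_type]
  rfl

-- The coercion `(j : ℕ)` in `desList` elaborates through the list monad, so this is not `rfl`.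
theorem desList_eq_map {m : ℕ} (v : Fin m → Bool) :
    desList v = ((List.finRange m).filter (fun j => v j)).map (fun j : Fin m => (j : ℕ) + 1) := by
  rw [desList, List.bind_eq_flatMap, ← Function.comp_def pure Fin.val, List.flatMap_pure_eq_map,
    List.map_map]
  rfl

theorem length_desList {m : ℕ} (v : Fin m → Bool) :
    (desList v).length = (Finset.univ.filter fun j => v j = true).card := by
  rw [desList_eq_map, List.length_map, Finset.card_def, Finset.filter_val, Fin.univ_def]
  simp

theorem length_desList_mirW {m : ℕ} (v : Fin m → Bool) :
    (desList (mirW v)).length = (desList v).length := by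
  rw [length_desList, length_desList]
  exact Finset.card_equiv Fin.revPerm fun i => by
    rw [Finset.mem_filter_univ, Finset.mem_filter_univ]; rfl

theorem mem_Icc_of_mem_desList {m : ℕ} {v : Fin m → Bool} {d : ℕ} (h : d ∈ desList v) :
    d ∈ Set.Icc 1 m := by
  obtain ⟨j, -, rfl⟩ := List.mem_map.1 ((desList_eq_map v) ▸ h)
  exact ⟨Nat.le_add_left 1 j, j.isLt⟩

theorem desList_cons {m : ℕ} (b : Bool) (v : Fin m → Bool) :
    desList (Fin.cons b v) = (if b then [1] else []) ++ (desList v).map (· + 1) := by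
  cases b <;> simp [desList_eq_map, List.finRange_succ, List.filter_map, Function.comp_def]

theorem desList_snoc {m : ℕ} (v : Fin m → Bool) (b : Bool) :
    desList (Fin.snoc v b) = desList v ++ (if b then [m + 1] else []) := by
  cases b <;> simp [desList_eq_map, List.finRange_succ_last, List.filter_map, Function.comp_def]

theorem length_desList_cons {m : ℕ} (b : Bool) (v : Fin m → Bool) :
    (desList (Fin.cons b v)).length = (desList v).length + b.toNat := by
  cases b <;> simp [desList_cons]

theorem mirW_cons {m : ℕ} (a : Bool) (u : Fin m → Bool) :
    mirW (Fin.cons a u) = Fin.snoc (mirW u) a := by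
  funext j
  induction j using Fin.lastCases <;> simp [mirW, Fin.rev_castSucc]

theorem cmplW_cons {m : ℕ} (a : Bool) (u : Fin m → Bool) :
    cmplW (Fin.cons a u) = Fin.cons (!a) (cmplW u) := by
  funext j
  induction j using Fin.cases <;> simp [cmplW]

theorem AAset_eq_posNotIn {m : ℕ} (u v : Fin m → Bool) :
    AAset u v = posNotIn (desList v) (desList u) := rfl

theorem posNotIn_desList_desList_snoc {m : ℕ} (U V : Fin m → Bool) (a : Bool) :
    posNotIn (desList V) (desList (Fin.snoc U a)) = AAset U V := by
  refine (posNotIn_congr_right fun d hd => ?_).symm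
  have hd' : d ≠ m + 1 := by obtain ⟨_, _⟩ := mem_Icc_of_mem_desList hd; omega
  cases a <;> simp [desList_snoc, hd']

theorem AAset_snoc_false {m : ℕ} (U V : Fin m → Bool) (a : Bool) :
    AAset (Fin.snoc U a) (Fin.snoc V false) = AAset U V := by
  simpa [AAset_eq_posNotIn, desList_snoc V false] using posNotIn_desList_desList_snoc U V a

theorem prod_AAset_snoc_true {M : Type*} [CommMonoid M] (f : ℕ → M) {m : ℕ}
    (U V : Fin m → Bool) (a : Bool) :
    ∏ k ∈ AAset (Fin.snoc U a) (Fin.snoc V true), f k =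
      (∏ k ∈ AAset U V, f k) * if a then 1 else f ((desList V).length + 1) := by
  rw [AAset_eq_posNotIn, desList_snoc V true, if_pos rfl, prod_posNotIn_append,
    posNotIn_desList_desList_snoc, posNotIn_singleton]
  have : m + 1 ∉ desList U := fun h => by obtain ⟨_, _⟩ := mem_Icc_of_mem_desList h; omega
  cases a <;> simp [desList_snoc, this, add_comm]

theorem posNotIn_map_desList_cons {m : ℕ} (U V : Fin m → Bool) (x : Bool) :
    posNotIn ((desList V).map (· + 1)) (desList (Fin.cons x U)) = AAset U V := by
  rw [AAset_eq_posNotIn, ← posNotIn_map (add_left_injective 1) (desList V)]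
  refine posNotIn_congr_right fun d hd => ?_
  obtain ⟨e, he, rfl⟩ := List.mem_map.1 hd
  have he' : e ≠ 0 := by obtain ⟨_, _⟩ := mem_Icc_of_mem_desList he; omega
  cases x <;> simp [desList_cons, he']

theorem AAset_cons_false {m : ℕ} (U V : Fin m → Bool) (x : Bool) :
    AAset (Fin.cons x U) (Fin.cons false V) = AAset U V := by
  simpa [AAset_eq_posNotIn, desList_cons false V] using posNotIn_map_desList_cons U V x

theorem prod_AAset_cons_true {M : Type*} [CommMonoid M] (f : ℕ → M) {m : ℕ}
    (U V : Fin m → Bool) (x : Bool) :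
    ∏ k ∈ AAset (Fin.cons x U) (Fin.cons true V), f k =
      (if x then 1 else f 1) * ∏ k ∈ AAset U V, f (k + 1) := by
  rw [AAset_eq_posNotIn, desList_cons true V, if_pos rfl, prod_posNotIn_append,
    posNotIn_map_desList_cons, posNotIn_singleton]
  have : 0 ∉ desList U := fun h => by obtain ⟨_, _⟩ := mem_Icc_of_mem_desList h; omega
  cases x <;> simp [desList_cons, this]

section matA

variable {R : Type*} [CommRing R] (q t : ℕ → R) {m : ℕ} (u v : Fin m → Bool)

theorem matA_cons_false_cons_false :
    matA q t (Fin.cons false u) (Fin.cons false v) = matA (fun i => q (i + 1)) t u v := by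
  simp [matA, mirW_cons, cmplW_cons, AAset_snoc_false, prod_AAset_cons_true]

theorem matA_cons_true_cons_false :
    matA q t (Fin.cons true u) (Fin.cons false v) = q 1 * matA (fun i => q (i + 1)) t u v := by
  simp only [matA, mirW_cons, AAset_snoc_false, cmplW_cons, Bool.not_true, Bool.not_false,
    prod_AAset_cons_true, Bool.false_eq_true, ↓reduceIte]
  ring

theorem matA_cons_false_cons_true :
    matA q t (Fin.cons false u) (Fin.cons true v) =
      matA q t u v * t ((desList v).length + 1) := by
  simp only [matA, mirW_cons, prod_AAset_snoc_true, Bool.false_eq_true, ↓reduceIte,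
    length_desList_mirW, cmplW_cons, Bool.not_false, Bool.not_true, AAset_cons_false]
  ring

theorem matA_cons_true_cons_true :
    matA q t (Fin.cons true u) (Fin.cons true v) = matA q t u v := by
  simp [matA, mirW_cons, cmplW_cons, prod_AAset_snoc_true, AAset_cons_false]

end matA

section matrixA

variable {R : Type*} [CommRing R] (q t : ℕ → R)

def matrixA (m : ℕ) : Matrix (Fin m → Bool) (Fin m → Bool) R :=
  Matrix.of fun u v => matA q t u v

theorem matrixA_succ_submatrix_consSplit (m : ℕ) :
    (matrixA q t (m + 1)).submatrix (consSplit m) (consSplit m) =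
      Matrix.fromBlocks (matrixA (fun i => q (i + 1)) t m)
        (matrixA q t m * Matrix.diagonal fun v => t ((desList v).length + 1))
        (q 1 • matrixA (fun i => q (i + 1)) t m) (matrixA q t m) := by
  ext (u | u) (v | v) <;>
    simp [matrixA, matA_cons_false_cons_false, matA_cons_true_cons_false,
      matA_cons_false_cons_true, matA_cons_true_cons_true]

theorem det_matrixA_succ (m : ℕ) :
    (matrixA q t (m + 1)).det = (matrixA (fun i => q (i + 1)) t m).det * (matrixA q t m).det *
      ∏ v : Fin m → Bool, (1 - q 1 * t ((desList v).length + 1)) := by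
  have hSchur : matrixA q t m -
        q 1 • (matrixA q t m * Matrix.diagonal fun v => t ((desList v).length + 1)) =
      matrixA q t m * Matrix.diagonal fun v => 1 - q 1 * t ((desList v).length + 1) := by
    ext u v
    simp only [Matrix.sub_apply, Matrix.smul_apply, Matrix.mul_diagonal, smul_eq_mul]
    ring
  rw [← Matrix.det_submatrix_equiv_self (consSplit m), matrixA_succ_submatrix_consSplit,
    Matrix.det_fromBlocks_smul_top_left, hSchur, Matrix.det_mul, Matrix.det_diagonal, mul_assoc]

end matrixA

theorem prod_length_desList {M : Type*} [CommMonoid M] (f : ℕ → M) (m : ℕ) :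
    ∏ v : Fin m → Bool, f (desList v).length =
      ∏ j ∈ Finset.range (m + 1), f j ^ m.choose j := by
  induction m generalizing f with
  | zero => simp [desList]
  | succ m ih =>
    rw [prod_fun_bool_succ, Finset.prod_range_pow_choose_succ, ← ih, ← ih]
    simp [length_desList_cons]

section linearFactors

variable {R : Type*} [CommRing R] (q t : ℕ → R)

def linearFactors (j : ℕ) : R :=
  ∏ i ∈ Finset.range j, (1 - q (i + 1) * t (j - i))

theorem linearFactors_succ (j : ℕ) :
    linearFactors q t (j + 1) = (1 - q 1 * t (j + 1)) * linearFactors (fun i => q (i + 1)) t j := by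
  rw [linearFactors, Finset.prod_range_succ', mul_comm]
  simp [linearFactors]

theorem det_matrixA (m : ℕ) :
    (matrixA q t m).det = ∏ v : Fin m → Bool, linearFactors q t (desList v).length := by
  induction m generalizing q with
  | zero => simp [matrixA, matA, AAset, desList, linearFactors]
  | succ m ih =>
    rw [det_matrixA_succ, ih, ih, prod_fun_bool_succ]
    simp only [length_desList_cons, Bool.toNat_false, Bool.toNat_true, add_zero,
      linearFactors_succ, Finset.prod_mul_distrib]
    ring

theorem prod_Icc_prod_Icc_eq_prod_range_linearFactors (m : ℕ) :
    ∏ k ∈ Finset.Icc 2 (m + 1), ∏ i ∈ Finset.Icc 1 (k - 1),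
        (1 - q i * t (k - i)) ^ (Nat.choose m (k - 1)) =
      ∏ j ∈ Finset.range (m + 1), linearFactors q t j ^ m.choose j := by
  rw [Finset.prod_range_succ', ← Finset.Ico_add_one_right_eq_Icc, Finset.prod_Ico_eq_prod_range]
  simp only [linearFactors, Finset.prod_range_zero, one_pow, mul_one]
  refine Finset.prod_congr rfl fun j _ => ?_
  rw [← Finset.prod_pow, ← Finset.Ico_add_one_right_eq_Icc, Finset.prod_Ico_eq_prod_range]
  refine Finset.prod_congr (by congr 1; omega) fun i _ => ?_
  rw [show 2 + j - 1 = j + 1 by omega, show 2 + j - (1 + i) = j + 1 - i by omega, add_comm 1 i]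

end linearFactors

/-- the determinant of `A_n` factors completely into linear
factors: `det A_n = ∏_{k=2}^{n} ∏_{i=1}^{k-1} (1 - q_i t_{k-i})^(binom(n-1,k-1))`
(here `n = m+1`). -/
theorem stmt_1 {R : Type*} [CommRing R] (m : ℕ) (q t : ℕ → R) :
    (Matrix.of (fun u v : Fin m → Bool => matA q t u v)).det =
      ∏ k ∈ Finset.Icc 2 (m+1), ∏ i ∈ Finset.Icc 1 (k-1),
        (1 - q i * t (k-i)) ^ (Nat.choose m (k-1)) := by
  rw [prod_Icc_prod_Icc_eq_prod_range_linearFactors, ← prod_length_desList]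
  exact det_matrixA q t m
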